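/- For all p, q, c ∈ ℂ with p ≠ q: if L is a complex Lie algebra admitting a basis e₁,…,e₅ whose only nonzero brackets among basis vectors (up to antisymmetry) are [e₂,e₃]=e₁, [e₁,e₄]=2e₁, [e₂,e₄]=e₂, [e₃,e₄]=e₃, [e₁,e₅]=(p+q)·e₁, [e₂,e₅]=p·e₂+e₃, [e₃,e₅]=q·e₃, [e₄,e₅]=c·e₁, and L′ is a complex Lie algebra admitting a basis f₁,…,f₅ whose only nonzero brackets are [f₂,f₃]=f₁, [f₁,f₄]=f₁, [f₂,f₄]=f₂, [f₁,f₅]=f₁, [f₃,f₅]=f₃, then L and L′ are isomorphic as Lie algebras over ℂ. -/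

import Mathlib

/-! Over `ℂ` with `p ≠ q`, `ad e₅` acts on `span {e₂, e₃}` with the distinct eigenvalues `p`, `q`,
with eigenvectors `e₂ + (p - q)⁻¹ e₃` and `e₃`. Recombining `e₄, e₅` into the elements that act
on these eigenvectors with weights `(1, 0)` and `(0, 1)`, and correcting the second one by a
multiple of `e₁` to absorb the cocycle `c e₁ = [e₄, e₅]`, yields a basis with the structure
constants of `d₄`. Two algebras with a common table of structure constants are isomorphic. -/

/-- `Realizes L c` means that the complex Lie algebra `L` admits a basis `e₁, …, e₅`
(indexed by `Fin 5`) in which the brackets of basis vectors are given by the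
structure constants `c`, i.e. `⁅eᵢ, eⱼ⁆ = ∑ₖ c i j k • eₖ` for all `i < j`,
all brackets of basis vectors being determined by these via antisymmetry. -/
def Realizes (L : Type) [LieRing L] [LieAlgebra ℂ L]
    (c : Fin 5 → Fin 5 → Fin 5 → ℂ) : Prop :=
  ∃ e : Module.Basis (Fin 5) ℂ L, ∀ i j : Fin 5, i < j →
    ⁅e i, e j⁆ = ∑ k, c i j k • e k

/-- The general solvable 5-dimensional Lie algebra with Heisenberg nilradical:
`[e₂,e₃]=e₁`, `[e₁,e₄]=2e₁`, `[e₂,e₄]=e₂`, `[e₃,e₄]=e₃`, `[e₁,e₅]=(p+q)·e₁`,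
`[e₂,e₅]=p·e₂+e₃`, `[e₃,e₅]=q·e₃`, `[e₄,e₅]=c·e₁`. -/
def heisenbergExt (p q c : ℂ) : Fin 5 → Fin 5 → Fin 5 → ℂ := fun i j =>
  if i = 1 ∧ j = 2 then ![1, 0, 0, 0, 0]
  else if i = 0 ∧ j = 3 then ![2, 0, 0, 0, 0]
  else if i = 1 ∧ j = 3 then ![0, 1, 0, 0, 0]
  else if i = 2 ∧ j = 3 then ![0, 0, 1, 0, 0]
  else if i = 0 ∧ j = 4 then ![p + q, 0, 0, 0, 0]
  else if i = 1 ∧ j = 4 then ![0, p, 1, 0, 0]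
  else if i = 2 ∧ j = 4 then ![0, 0, q, 0, 0]
  else if i = 3 ∧ j = 4 then ![c, 0, 0, 0, 0]
  else 0

/-- The rigid algebra `d₄`: `[f₂,f₃]=f₁`, `[f₁,f₄]=f₁`, `[f₂,f₄]=f₂`, `[f₁,f₅]=f₁`,
`[f₃,f₅]=f₃`. -/
def d4pattern : Fin 5 → Fin 5 → Fin 5 → ℂ := fun i j =>
  if i = 1 ∧ j = 2 then ![1, 0, 0, 0, 0]
  else if i = 0 ∧ j = 3 then ![1, 0, 0, 0, 0]
  else if i = 1 ∧ j = 3 then ![0, 1, 0, 0, 0]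
  else if i = 0 ∧ j = 4 then ![1, 0, 0, 0, 0]
  else if i = 2 ∧ j = 4 then ![0, 0, 1, 0, 0]
  else 0

theorem LinearMap.map_lie_of_basis {R ι L L' : Type*} [CommRing R] [LinearOrder ι]
    [LieRing L] [LieAlgebra R L] [LieRing L'] [LieAlgebra R L']
    (b : Module.Basis ι R L) (φ : L →ₗ[R] L')
    (h : ∀ i j, i < j → φ ⁅b i, b j⁆ = ⁅φ (b i), φ (b j)⁆) (x y : L) :
    φ ⁅x, y⁆ = ⁅φ x, φ y⁆ := by
  have h_basis : ∀ i j, φ ⁅b i, b j⁆ = ⁅φ (b i), φ (b j)⁆ := by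
    intro i j
    rcases lt_trichotomy i j with hij | rfl | hji
    · exact h i j hij
    · simp only [lie_self, map_zero]
    · rw [← lie_skew, map_neg, h j i hji, lie_skew]
  let B : L →ₗ[R] L →ₗ[R] L' := LinearMap.mk₂ R (fun x y => φ ⁅x, y⁆)
    (by simp [add_lie]) (by simp [smul_lie]) (by simp [lie_add]) (by simp [lie_smul])
  let B' : L →ₗ[R] L →ₗ[R] L' := LinearMap.mk₂ R (fun x y => ⁅φ x, φ y⁆)
    (by simp [add_lie]) (by simp [smul_lie]) (by simp [lie_add]) (by simp [lie_smul])
  exact LinearMap.congr_fun₂ (LinearMap.ext_basis b b h_basis : B = B') x y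

namespace Realizes

variable {L : Type} [LieRing L] [LieAlgebra ℂ L]

theorem nonempty_lieEquiv {L' : Type} [LieRing L'] [LieAlgebra ℂ L']
    {c : Fin 5 → Fin 5 → Fin 5 → ℂ} (hL : Realizes L c) (hL' : Realizes L' c) :
    Nonempty (L ≃ₗ⁅ℂ⁆ L') := by
  obtain ⟨e, he⟩ := hL
  obtain ⟨f, hf⟩ := hL'
  let Φ := e.equiv f (Equiv.refl _)
  have map_lie : ∀ x y, Φ ⁅x, y⁆ = ⁅Φ x, Φ y⁆ :=
    LinearMap.map_lie_of_basis e Φ.toLinearMap fun i j hij => by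
      simp [Φ, he i j hij, hf i j hij, map_sum, map_smul]
  exact ⟨{ Φ with map_lie' := map_lie _ _ }⟩

/-- The basis of `L` adapted to `d₄`, written in a basis `e` realizing `heisenbergExt p q c`
(index `i` stands for the paper's `e_{i+1}`). -/
noncomputable def d4Family (p q c : ℂ) (e : Fin 5 → L) : Fin 5 → L :=
  ![e 0, e 1 + (p - q)⁻¹ • e 2, e 2, (p - q)⁻¹ • (e 4 - q • e 3),
    (p - q)⁻¹ • (p • e 3 - e 4 - c • e 0)]

theorem top_le_span_d4Family {p q : ℂ} (hpq : p ≠ q) (c : ℂ) (e : Module.Basis (Fin 5) ℂ L) :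
    ⊤ ≤ Submodule.span ℂ (Set.range (d4Family p q c e)) := by
  have hpq' : p - q ≠ 0 := sub_ne_zero.mpr hpq
  -- row `i` of `A` expresses `e i` in the family `d4Family p q c e`
  let A : Matrix (Fin 5) (Fin 5) ℂ := !![1, 0, 0, 0, 0; 0, 1, -(p - q)⁻¹, 0, 0; 0, 0, 1, 0, 0;
    (p - q)⁻¹ * c, 0, 0, 1, 1; (p - q)⁻¹ * q * c, 0, 0, p, q]
  have mem_span : ∀ i, e i ∈ Submodule.span ℂ (Set.range (d4Family p q c e)) := by
    refine fun i => (Submodule.mem_span_range_iff_exists_fun ℂ).mpr ⟨A i, ?_⟩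
    fin_cases i <;> simp [A, d4Family, Fin.sum_univ_five] <;>
      match_scalars <;> field_simp <;> ring
  exact e.span_eq ▸ Submodule.span_le.mpr (Set.range_subset_iff.mpr mem_span)

theorem lie_d4Family {p q c : ℂ} (hpq : p ≠ q) {e : Fin 5 → L}
    (he : ∀ i j, i < j → ⁅e i, e j⁆ = ∑ k, heisenbergExt p q c i j k • e k) (i j : Fin 5)
    (hij : i < j) :
    ⁅d4Family p q c e i, d4Family p q c e j⁆ = ∑ k, d4pattern i j k • d4Family p q c e k := by
  have hpq' : p - q ≠ 0 := sub_ne_zero.mpr hpq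
  have he_swap : ∀ i j : Fin 5, j < i → ⁅e i, e j⁆ = -⁅e j, e i⁆ := fun _ _ _ =>
    (lie_skew _ _).symm
  fin_cases i <;> fin_cases j <;> simp at hij <;>
    simp [d4Family, Fin.sum_univ_five, d4pattern, heisenbergExt, he, he_swap, lie_sub, sub_lie,
      -smul_eq_zero] <;>
    match_scalars <;> field_simp <;> ring

theorem d4pattern_of_heisenbergExt {p q c : ℂ} (hpq : p ≠ q)
    (hL : Realizes L (heisenbergExt p q c)) : Realizes L d4pattern := by
  obtain ⟨e, he⟩ := hL
  let b := basisOfTopLeSpanOfCardEqFinrank (d4Family p q c e) (top_le_span_d4Family hpq c e)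
    (by simp [Module.finrank_eq_card_basis e])
  refine ⟨b, fun i j hij => ?_⟩
  simpa only [b, coe_basisOfTopLeSpanOfCardEqFinrank] using lie_d4Family hpq he i j hij

end Realizes

/-- For `p ≠ q`, the solvable algebra with Heisenberg nilradical and parameters
`p, q, c` is isomorphic to the rigid algebra `d₄`. -/
theorem heisenberg_ext_iso_d4 (p q c : ℂ) (hpq : p ≠ q)
    (L L' : Type) [LieRing L] [LieAlgebra ℂ L] [LieRing L'] [LieAlgebra ℂ L']
    (hL : Realizes L (heisenbergExt p q c)) (hL' : Realizes L' d4pattern) :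
    Nonempty (L ≃ₗ⁅ℂ⁆ L') :=
  (hL.d4pattern_of_heisenbergExt hpq).nonempty_lieEquiv hL'
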